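/- (Cassini/Simpson's formula) For every positive integer n, (b/a)^{2ε(n)}·j_{n-1}·j_{n+1} − (b/a)·j_n^2 = 2^{n-1}·(−b/a)^{ε(n)}, where ε(n) = 0 if n is even and 1 if n is odd. -/

import Mathlib

noncomputable def jj (a b : ℝ) : ℕ → ℝ
  | 0 => 0
  | 1 => 1
  | n + 2 => (if Even (n + 2) then a else b) * jj a b (n + 1) + 2 * jj a b n

lemma jj_aux (a b : ℝ) (ha : a ≠ 0) (hb : b ≠ 0) (k : ℕ) :
    (b / a) ^ (2 * ((k + 1) % 2)) * jj a b k * jj a b (k + 2) - (b / a) * jj a b (k + 1) ^ 2 =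
      2 ^ k * (-(b / a)) ^ ((k + 1) % 2) := by
  induction k with
  | zero =>
      show (b/a)^(2*1) * jj a b 0 * jj a b 2 - (b/a) * jj a b 1 ^ 2 = 2^0 * (-(b/a))^1
      simp [jj]
  | succ k IH =>
      have hz : jj a b (k + 2) = (if Even (k + 2) then a else b) * jj a b (k + 1) + 2 * jj a b k := by
        rw [jj]
      have hw : jj a b (k + 3) = (if Even (k + 3) then a else b) * jj a b (k + 2) + 2 * jj a b (k + 1) := by
        rw [jj]
      rcases Nat.even_or_odd k with ⟨t, rfl⟩ | ⟨t, rfl⟩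
      · -- k = 2t even
        have e1 : (t + t + 1) % 2 = 1 := by omega
        have e2 : (t + t + 1 + 1) % 2 = 0 := by omega
        rw [e1] at IH
        rw [e2]
        have hz' : jj a b (t + t + 2) = a * jj a b (t + t + 1) + 2 * jj a b (t + t) := by
          rw [hz, if_pos ⟨t + 1, by ring⟩]
        have hw' : jj a b (t + t + 3) = b * jj a b (t + t + 2) + 2 * jj a b (t + t + 1) := by
          rw [hw, if_neg (by rw [Nat.even_iff]; omega)]
        rw [hz'] at IH
        rw [show t + t + 1 + 2 = t + t + 3 from rfl, hw', hz']
        simp only [Nat.mul_one, Nat.mul_zero, pow_zero, pow_one] at IH ⊢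
        field_simp at IH ⊢
        have clean : b * jj a b (t + t) * (a * jj a b (t + t + 1) + 2 * jj a b (t + t))
            - a * jj a b (t + t + 1) ^ 2 = -(2 ^ (t + t) * a) := by
          apply mul_left_cancel₀ (show (a ^ 2 * b : ℝ) ≠ 0 by positivity)
          linear_combination (a ^ 2 * b) * IH
        linear_combination (-2 : ℝ) * clean
      · -- k = 2t+1 odd
        have e1 : (2 * t + 1 + 1) % 2 = 0 := by omega
        have e2 : (2 * t + 1 + 1 + 1) % 2 = 1 := by omega
        rw [e1] at IH
        rw [e2]
        have hz' : jj a b (2 * t + 1 + 2) = b * jj a b (2 * t + 1 + 1) + 2 * jj a b (2 * t + 1) := by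
          rw [hz, if_neg (by rw [Nat.even_iff]; omega)]
        have hw' : jj a b (2 * t + 1 + 3) = a * jj a b (2 * t + 1 + 2) + 2 * jj a b (2 * t + 1 + 1) := by
          rw [hw, if_pos ⟨t + 2, by ring⟩]
        rw [hz'] at IH
        rw [show 2 * t + 1 + 1 + 2 = 2 * t + 1 + 3 from rfl, hw', hz']
        simp only [Nat.mul_one, Nat.mul_zero, pow_zero, pow_one] at IH ⊢
        field_simp at IH ⊢
        linear_combination (-2 : ℝ) * IH

theorem stmt4 (a b : ℝ) (ha : a ≠ 0) (hb : b ≠ 0) (n : ℕ) (hn : 1 ≤ n) :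
    (b / a) ^ (2 * (n % 2)) * jj a b (n - 1) * jj a b (n + 1) - (b / a) * jj a b n ^ 2 =
      2 ^ (n - 1) * (-(b / a)) ^ (n % 2) := by
  obtain ⟨k, rfl⟩ : ∃ k, n = k + 1 := ⟨n - 1, by omega⟩
  simpa using jj_aux a b ha hb k
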